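/- arXiv:1604.04774 — 2 statements merged into one kernel-verified Lean document; each statement's English description precedes it below -/
import Mathlib

section
/- Let a ∈ ℂ and f(x,y) = x^3 + a x^2 y^2 + y^6. Then f has an isolated singularity at the origin (i.e. dim_ℂ ℂ[[x,y]]/Jac(f) < ∞) if and only if 4a^3 + 27 ≠ 0, and in that case the Milnor number equals 10. -/
/-!
If `4a³ + 27 ≠ 0`, the partials give `2(4a³ + 27) · x y⁵ ∈ Jac(f)`, hence `y⁷ = x⁴ = 0` in the
Milnor algebra. Every power series is then congruent to a polynomial, and the relations reduce
every monomial to the ten monomials `x^i y^j` (`i < 2`, `j < 5`). These are independent, because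
ten explicit linear combinations of coefficients vanish on `Jac(f)` and are dual to them.

If `4a³ + 27 = 0`, both partials vanish on the curve `x = -(2a/3) y²`. The substitution
`(x, y) ↦ (-(2a/3) t², t)` into `ℂ[[t]]` kills `Jac(f)` and sends `y^m` to `t^m`, so the classes
of all powers of `y` are linearly independent.
-/

open MvPowerSeries

theorem Ideal.Quotient.linearIndependent_mk_comp {K A M ι : Type*} [CommRing K] [CommRing A]
    [Algebra K A] [AddCommGroup M] [Module K M] {I : Ideal A} (Φ : A →ₗ[K] M)
    (hΦ : ∀ z ∈ I, Φ z = 0) {v : ι → A} (hv : LinearIndependent K (Φ ∘ v)) :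
    LinearIndependent K (Ideal.Quotient.mk I ∘ v) :=
  LinearIndependent.of_comp
    ((I.restrictScalars K).liftQ Φ hΦ ∘ₗ (Submodule.Quotient.restrictScalarsEquiv K I).symm) hv

theorem PowerSeries.linearIndependent_X_pow (R : Type*) [CommRing R] :
    LinearIndependent R fun n : ℕ => (PowerSeries.X : PowerSeries R) ^ n := by
  rw [linearIndependent_iff']
  intro s g hg i hi
  simpa [map_sum, PowerSeries.coeff_X_pow, hi] using congrArg (PowerSeries.coeff i) hg

namespace MvPowerSeries

variable {R : Type*} [CommRing R]

noncomputable def bidegree (i j : ℕ) : Fin 2 →₀ ℕ := Finsupp.single 0 i + Finsupp.single 1 j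

@[simp] theorem bidegree_apply_zero (i j : ℕ) : bidegree i j 0 = i := by simp [bidegree]

@[simp] theorem bidegree_apply_one (i j : ℕ) : bidegree i j 1 = j := by simp [bidegree]

theorem bidegree_apply_zero_apply_one (m : Fin 2 →₀ ℕ) : bidegree (m 0) (m 1) = m := by
  ext s; fin_cases s <;> simp

theorem bidegree_inj {i j k l : ℕ} : bidegree i j = bidegree k l ↔ i = k ∧ j = l := by
  refine ⟨fun h => ⟨?_, ?_⟩, fun h => h.1 ▸ h.2 ▸ rfl⟩
  · simpa using congrArg (· 0) h
  · simpa using congrArg (· 1) h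

theorem bidegree_le_bidegree {i j k l : ℕ} : bidegree i j ≤ bidegree k l ↔ i ≤ k ∧ j ≤ l := by
  refine ⟨fun h => ⟨by simpa using h 0, by simpa using h 1⟩, fun h s => ?_⟩
  fin_cases s <;> simp [h.1, h.2]

theorem bidegree_sub_bidegree (i j k l : ℕ) :
    bidegree i j - bidegree k l = bidegree (i - k) (j - l) := by
  ext s; fin_cases s <;> simp

theorem X_pow_mul_X_pow_eq_monomial (i j : ℕ) :
    (X 0 ^ i * X 1 ^ j : MvPowerSeries (Fin 2) R) = monomial (bidegree i j) 1 := by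
  rw [X_pow_eq, X_pow_eq, monomial_mul_monomial, mul_one, bidegree]

theorem monomial_bidegree (i j : ℕ) (c : R) :
    monomial (bidegree i j) c = C c * X 0 ^ i * X 1 ^ j := by
  rw [mul_assoc, X_pow_mul_X_pow_eq_monomial, ← monomial_zero_eq_C_apply, monomial_mul_monomial,
    zero_add, mul_one]

theorem coeff_bidegree_mul_monomial (u : MvPowerSeries (Fin 2) R) (i j k l : ℕ) (c : R) :
    coeff (bidegree i j) (u * monomial (bidegree k l) c) =
      if k ≤ i ∧ l ≤ j then coeff (bidegree (i - k) (j - l)) u * c else 0 := by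
  simp only [coeff_mul_monomial, bidegree_le_bidegree, bidegree_sub_bidegree]

theorem mem_span_X_pow_pair_of_coeff_eq_zero {N : ℕ} {g : MvPowerSeries (Fin 2) R}
    (hg : ∀ m : Fin 2 →₀ ℕ, m 0 < N → m 1 < N → coeff m g = 0) :
    g ∈ Ideal.span {X 0 ^ N, X 1 ^ N} := by
  classical
  let g₀ : MvPowerSeries (Fin 2) R := fun m => if N ≤ m 0 then coeff m g else 0
  have coeff_g₀ (m : Fin 2 →₀ ℕ) : coeff m g₀ = if N ≤ m 0 then coeff m g else 0 := rfl
  obtain ⟨u, hu⟩ : X 0 ^ N ∣ g₀ := X_pow_dvd_iff.mpr fun m hm => by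
    rw [coeff_g₀, if_neg hm.not_ge]
  obtain ⟨v, hv⟩ : X 1 ^ N ∣ g - g₀ := X_pow_dvd_iff.mpr fun m hm => by
    rw [map_sub, coeff_g₀]
    split_ifs with h0
    · exact sub_self _
    · rw [hg m (not_le.mp h0) hm, sub_zero]
  exact Ideal.mem_span_pair.mpr ⟨u, v, by rw [mul_comm u, mul_comm v, ← hu, ← hv]; ring⟩

/-- Once both variables are nilpotent modulo `I`, truncation shows that every class is the
class of a polynomial. -/
theorem span_X_pow_mul_X_pow_quotient_eq_top {I : Ideal (MvPowerSeries (Fin 2) R)}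
    (h₀ : IsNilpotent (Ideal.Quotient.mk I (X 0))) (h₁ : IsNilpotent (Ideal.Quotient.mk I (X 1))) :
    Submodule.span R (Set.range fun p : ℕ × ℕ =>
      Ideal.Quotient.mk I (X 0) ^ p.1 * Ideal.Quotient.mk I (X 1) ^ p.2) = ⊤ := by
  obtain ⟨N₀, hN₀⟩ := h₀
  obtain ⟨N₁, hN₁⟩ := h₁
  set N := max N₀ N₁
  have hspan_le : Ideal.span {X 0 ^ N, X 1 ^ N} ≤ I := by
    rw [Ideal.span_le, Set.insert_subset_iff, Set.singleton_subset_iff]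
    simp only [SetLike.mem_coe, ← Ideal.Quotient.eq_zero_iff_mem, map_pow]
    exact ⟨pow_eq_zero_of_le (le_max_left _ _) hN₀, pow_eq_zero_of_le (le_max_right _ _) hN₁⟩
  rw [Submodule.eq_top_iff']
  intro q
  obtain ⟨f, rfl⟩ := Ideal.Quotient.mk_surjective q
  have hf : Ideal.Quotient.mk I f = Ideal.Quotient.mk I (trunc R (bidegree N N) f) := by
    refine Ideal.Quotient.eq.mpr (hspan_le (mem_span_X_pow_pair_of_coeff_eq_zero fun m h0 h1 => ?_))
    have hm : m < bidegree N N := by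
      refine lt_of_le_of_ne (fun s => ?_) fun h => h0.ne (by rw [h, bidegree_apply_zero])
      fin_cases s <;> simp [h0.le, h1.le]
    rw [map_sub, MvPolynomial.coeff_coe, coeff_trunc, if_pos hm, sub_self]
  rw [hf]
  induction trunc R (bidegree N N) f using MvPolynomial.induction_on' with
  | monomial m c =>
    have hmon : monomial m c = c • (X 0 ^ m 0 * X 1 ^ m 1 : MvPowerSeries (Fin 2) R) := by
      rw [X_pow_mul_X_pow_eq_monomial, bidegree_apply_zero_apply_one, ← map_smul, smul_eq_mul,
        mul_one]
    rw [MvPolynomial.coe_monomial, hmon, ← Ideal.Quotient.mkₐ_eq_mk R, map_smul, map_mul,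
      map_pow, map_pow]
    exact Submodule.smul_mem _ _ (Submodule.subset_span ⟨(m 0, m 1), rfl⟩)
  | add p q hp hq => rw [MvPolynomial.coe_add, map_add]; exact add_mem hp hq

end MvPowerSeries

namespace J10

variable {A : Type*} [CommRing A] [Algebra ℂ A]

def basisMonomial (x y : A) (p : Fin 2 × Fin 5) : A := x ^ (p.1 : ℕ) * y ^ (p.2 : ℕ)

section Relations

variable {a : ℂ} {x y : A}
  (h₁ : 3 * x ^ 2 + 2 * algebraMap ℂ A a * x * y ^ 2 = 0)
  (h₂ : 2 * algebraMap ℂ A a * x ^ 2 * y + 6 * y ^ 5 = 0)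
include h₁ h₂

theorem mul_pow_five_eq_zero (ha : 4 * a ^ 3 + 27 ≠ 0) : x * y ^ 5 = 0 := by
  have hunit : IsUnit (algebraMap ℂ A (2 * (4 * a ^ 3 + 27))) :=
    (isUnit_iff_ne_zero.mpr (mul_ne_zero two_ne_zero ha)).map _
  refine hunit.mul_right_eq_zero.mp ?_
  simp only [map_mul, map_add, map_pow, map_ofNat]
  linear_combination (4 * algebraMap ℂ A a ^ 2 * y ^ 3 - 6 * algebraMap ℂ A a * x * y) * h₁
    + 9 * x * h₂

theorem pow_seven_eq_zero (ha : 4 * a ^ 3 + 27 ≠ 0) : y ^ 7 = 0 := by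
  have hxy := mul_pow_five_eq_zero h₁ h₂ ha
  have hunit : IsUnit (algebraMap ℂ A 18) := (isUnit_iff_ne_zero.mpr (by norm_num)).map _
  refine hunit.mul_right_eq_zero.mp ?_
  rw [map_ofNat]
  linear_combination 3 * y ^ 2 * h₂ - 2 * algebraMap ℂ A a * y ^ 3 * h₁
    + 4 * algebraMap ℂ A a ^ 2 * hxy

theorem pow_four_eq_zero (ha : 4 * a ^ 3 + 27 ≠ 0) : x ^ 4 = 0 := by
  have hxy := mul_pow_five_eq_zero h₁ h₂ ha
  have hunit : IsUnit (algebraMap ℂ A 27) := (isUnit_iff_ne_zero.mpr (by norm_num)).map _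
  refine hunit.mul_right_eq_zero.mp ?_
  rw [map_ofNat]
  linear_combination (9 * x ^ 2 - 6 * algebraMap ℂ A a * x * y ^ 2
    + 4 * algebraMap ℂ A a ^ 2 * y ^ 4) * h₁ - 8 * algebraMap ℂ A a ^ 3 * y * hxy

theorem mul_pow_mem_span (ha : 4 * a ^ 3 + 27 ≠ 0) (m : ℕ) :
    x * y ^ m ∈ Submodule.span ℂ (Set.range (basisMonomial x y)) := by
  rcases lt_or_ge m 5 with hm | hm
  · exact Submodule.subset_span ⟨(1, ⟨m, hm⟩), by simp [basisMonomial]⟩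
  · obtain ⟨k, rfl⟩ := Nat.exists_eq_add_of_le' hm
    rw [pow_add, mul_left_comm, mul_pow_five_eq_zero h₁ h₂ ha, mul_zero]
    exact zero_mem _

theorem pow_mem_span (ha : 4 * a ^ 3 + 27 ≠ 0) (m : ℕ) :
    y ^ m ∈ Submodule.span ℂ (Set.range (basisMonomial x y)) := by
  rcases lt_or_ge m 5 with hm | hm
  · exact Submodule.subset_span ⟨(0, ⟨m, hm⟩), by simp [basisMonomial]⟩
  · obtain ⟨k, rfl⟩ := Nat.exists_eq_add_of_le' hm
    have h : (18 : ℂ) • y ^ (k + 5) = (4 * a ^ 2) • (x * y ^ (k + 3)) := by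
      simp only [Algebra.smul_def, map_mul, map_pow, map_ofNat]
      linear_combination 3 * y ^ k * h₂ - 2 * algebraMap ℂ A a * y ^ (k + 1) * h₁
    rw [← Submodule.smul_mem_iff _ (by norm_num : (18 : ℂ) ≠ 0), h]
    exact Submodule.smul_mem _ _ (mul_pow_mem_span h₁ h₂ ha _)

theorem pow_mul_pow_mem_span (ha : 4 * a ^ 3 + 27 ≠ 0) (i j : ℕ) :
    x ^ i * y ^ j ∈ Submodule.span ℂ (Set.range (basisMonomial x y)) := by
  induction i using Nat.strong_induction_on generalizing j with
  | _ i ih =>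
    match i with
    | 0 => simpa using pow_mem_span h₁ h₂ ha j
    | 1 => simpa using mul_pow_mem_span h₁ h₂ ha j
    | i + 2 =>
      have h : (3 : ℂ) • (x ^ (i + 2) * y ^ j) = (-2 * a) • (x ^ (i + 1) * y ^ (j + 2)) := by
        simp only [Algebra.smul_def, map_mul, map_neg, map_ofNat]
        linear_combination x ^ i * y ^ j * h₁
      rw [← Submodule.smul_mem_iff _ (by norm_num : (3 : ℂ) ≠ 0), h]
      exact Submodule.smul_mem _ _ (ih (i + 1) (by omega) _)

end Relations

noncomputable def partialX (a : ℂ) : MvPowerSeries (Fin 2) ℂ :=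
  3 * X 0 ^ 2 + 2 * C a * X 0 * X 1 ^ 2

noncomputable def partialY (a : ℂ) : MvPowerSeries (Fin 2) ℂ :=
  2 * C a * X 0 ^ 2 * X 1 + 6 * X 1 ^ 5

noncomputable def jacobianIdeal (a : ℂ) : Ideal (MvPowerSeries (Fin 2) ℂ) :=
  Ideal.span {partialX a, partialY a}

abbrev MilnorAlgebra (a : ℂ) : Type := MvPowerSeries (Fin 2) ℂ ⧸ jacobianIdeal a

noncomputable abbrev xClass (a : ℂ) : MilnorAlgebra a := Ideal.Quotient.mk _ (X 0)

noncomputable abbrev yClass (a : ℂ) : MilnorAlgebra a := Ideal.Quotient.mk _ (X 1)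

theorem partialX_eq (a : ℂ) :
    partialX a = monomial (bidegree 2 0) 3 + monomial (bidegree 1 2) (2 * a) := by
  simp only [monomial_bidegree, partialX, map_mul, map_ofNat]
  ring

theorem partialY_eq (a : ℂ) :
    partialY a = monomial (bidegree 2 1) (2 * a) + monomial (bidegree 0 5) 6 := by
  simp only [monomial_bidegree, partialY, map_mul, map_ofNat]
  ring

theorem mk_C (a c : ℂ) : Ideal.Quotient.mk (jacobianIdeal a) (C c) = algebraMap ℂ _ c := by
  rw [c_eq_algebraMap, Ideal.Quotient.mk_algebraMap]

theorem relation_partialX (a : ℂ) :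
    3 * xClass a ^ 2 + 2 * algebraMap ℂ _ a * xClass a * yClass a ^ 2 = 0 := by
  have h : Ideal.Quotient.mk (jacobianIdeal a) (partialX a) = 0 :=
    Ideal.Quotient.eq_zero_iff_mem.mpr (Ideal.subset_span (Set.mem_insert _ _))
  simpa only [partialX, map_add, map_mul, map_pow, map_ofNat, mk_C] using h

theorem relation_partialY (a : ℂ) :
    2 * algebraMap ℂ _ a * xClass a ^ 2 * yClass a + 6 * yClass a ^ 5 = 0 := by
  have h : Ideal.Quotient.mk (jacobianIdeal a) (partialY a) = 0 :=
    Ideal.Quotient.eq_zero_iff_mem.mpr (Ideal.subset_span (Set.mem_insert_of_mem _ rfl))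
  simpa only [partialY, map_add, map_mul, map_pow, map_ofNat, mk_C] using h

/-- Each correction coefficient is the coordinate on `x y^j` of the monomial it reads, e.g.
`x² ≡ -(2a/3) x y²` and `y⁵ ≡ (2a²/9) x y³` modulo `Jac(f)`. -/
noncomputable def dualCoeff (a : ℂ) : Fin 2 × Fin 5 → MvPowerSeries (Fin 2) ℂ →ₗ[ℂ] ℂ
  | (0, j) => coeff (bidegree 0 j)
  | (1, 0) => coeff (bidegree 1 0)
  | (1, 1) => coeff (bidegree 1 1)
  | (1, 2) => coeff (bidegree 1 2) - (2 * a / 3) • coeff (bidegree 2 0)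
  | (1, 3) => coeff (bidegree 1 3) - (2 * a / 3) • coeff (bidegree 2 1)
      + (2 * a ^ 2 / 9) • coeff (bidegree 0 5)
  | (1, 4) => coeff (bidegree 1 4) - (2 * a / 3) • coeff (bidegree 2 2)
      + (4 * a ^ 2 / 9) • coeff (bidegree 3 0) + (2 * a ^ 2 / 9) • coeff (bidegree 0 6)

theorem dualCoeff_mul_partialX (a : ℂ) (p : Fin 2 × Fin 5) (u : MvPowerSeries (Fin 2) ℂ) :
    dualCoeff a p (u * partialX a) = 0 := by
  rw [partialX_eq, mul_add]
  rcases p with ⟨i, j⟩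
  fin_cases i <;> fin_cases j <;> simp [dualCoeff, coeff_bidegree_mul_monomial] <;> ring

theorem dualCoeff_mul_partialY (a : ℂ) (p : Fin 2 × Fin 5) (u : MvPowerSeries (Fin 2) ℂ) :
    dualCoeff a p (u * partialY a) = 0 := by
  rw [partialY_eq, mul_add]
  rcases p with ⟨i, j⟩
  fin_cases i <;> fin_cases j <;> simp [dualCoeff, coeff_bidegree_mul_monomial] <;> ring

theorem dualCoeff_of_mem_jacobianIdeal {a : ℂ} {z : MvPowerSeries (Fin 2) ℂ}
    (hz : z ∈ jacobianIdeal a) (p : Fin 2 × Fin 5) : dualCoeff a p z = 0 := by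
  obtain ⟨u, v, rfl⟩ := Ideal.mem_span_pair.mp hz
  rw [map_add, dualCoeff_mul_partialX, dualCoeff_mul_partialY, add_zero]

theorem dualCoeff_X_pow_mul_X_pow (a : ℂ) (p q : Fin 2 × Fin 5) :
    dualCoeff a p (X 0 ^ (q.1 : ℕ) * X 1 ^ (q.2 : ℕ)) = (Pi.single q 1 : Fin 2 × Fin 5 → ℂ) p := by
  rw [X_pow_mul_X_pow_eq_monomial]
  rcases p with ⟨i, j⟩
  rcases q with ⟨k, l⟩
  fin_cases i <;> fin_cases j <;> fin_cases k <;> fin_cases l <;>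
    simp [dualCoeff, coeff_monomial, bidegree_inj]

theorem linearIndependent_basisMonomial (a : ℂ) :
    LinearIndependent ℂ (basisMonomial (xClass a) (yClass a)) := by
  have hdual : LinearMap.pi (dualCoeff a) ∘
      (fun q : Fin 2 × Fin 5 => X 0 ^ (q.1 : ℕ) * X 1 ^ (q.2 : ℕ)) = fun q => Pi.single q 1 :=
    funext fun q => funext fun p => dualCoeff_X_pow_mul_X_pow a p q
  have h := Ideal.Quotient.linearIndependent_mk_comp (LinearMap.pi (dualCoeff a))
    (fun z hz => funext (dualCoeff_of_mem_jacobianIdeal hz))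
    (hdual ▸ Pi.linearIndependent_single_one (Fin 2 × Fin 5) ℂ)
  have hmk : basisMonomial (xClass a) (yClass a) = Ideal.Quotient.mk _ ∘
      fun q : Fin 2 × Fin 5 => X 0 ^ (q.1 : ℕ) * X 1 ^ (q.2 : ℕ) :=
    funext fun q => by simp [basisMonomial]
  rw [hmk]
  exact h

theorem span_basisMonomial_eq_top {a : ℂ} (ha : 4 * a ^ 3 + 27 ≠ 0) :
    Submodule.span ℂ (Set.range (basisMonomial (xClass a) (yClass a))) = ⊤ := by
  have h₁ := relation_partialX a
  have h₂ := relation_partialY a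
  rw [eq_top_iff, ← span_X_pow_mul_X_pow_quotient_eq_top ⟨4, pow_four_eq_zero h₁ h₂ ha⟩
    ⟨7, pow_seven_eq_zero h₁ h₂ ha⟩, Submodule.span_le]
  rintro _ ⟨⟨i, j⟩, rfl⟩
  exact pow_mul_pow_mem_span h₁ h₂ ha i j

noncomputable def milnorBasis {a : ℂ} (ha : 4 * a ^ 3 + 27 ≠ 0) :
    Module.Basis (Fin 2 × Fin 5) ℂ (MilnorAlgebra a) :=
  Module.Basis.mk (linearIndependent_basisMonomial a) (span_basisMonomial_eq_top ha).ge

theorem hasSubst_curve (c : ℂ) :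
    HasSubst ![PowerSeries.C c * PowerSeries.X ^ 2, (PowerSeries.X : PowerSeries ℂ)] := by
  have hX : constantCoeff (PowerSeries.X : PowerSeries ℂ) = 0 := PowerSeries.constantCoeff_X
  exact hasSubst_of_constantCoeff_zero fun s => by fin_cases s <;> simp [hX]

/-- Restriction to the curve `x = c y²`, parametrized by `y = t`. -/
noncomputable def substCurve (c : ℂ) : MvPowerSeries (Fin 2) ℂ →ₐ[ℂ] PowerSeries ℂ :=
  substAlgHom (hasSubst_curve c)

theorem substCurve_X_zero (c : ℂ) :
    substCurve c (X 0) = PowerSeries.C c * PowerSeries.X ^ 2 := by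
  rw [substCurve, substAlgHom_X]; rfl

theorem substCurve_X_one (c : ℂ) : substCurve c (X 1) = PowerSeries.X := by
  rw [substCurve, substAlgHom_X]; rfl

theorem substCurve_C (c a : ℂ) : substCurve c (C a) = PowerSeries.C a := by
  rw [c_eq_algebraMap, AlgHom.commutes]; rfl

theorem substCurve_partialX (a c : ℂ) :
    substCurve c (partialX a) = PowerSeries.C (c * (3 * c + 2 * a)) * PowerSeries.X ^ 4 := by
  simp only [partialX, map_add, map_mul, map_pow, map_ofNat, substCurve_X_zero,
    substCurve_X_one, substCurve_C]
  ring

theorem substCurve_partialY (a c : ℂ) :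
    substCurve c (partialY a) = PowerSeries.C (2 * a * c ^ 2 + 6) * PowerSeries.X ^ 5 := by
  simp only [partialY, map_add, map_mul, map_pow, map_ofNat, substCurve_X_zero,
    substCurve_X_one, substCurve_C]
  ring

theorem jacobianIdeal_le_ker_substCurve {a : ℂ} (ha : 4 * a ^ 3 + 27 = 0) :
    jacobianIdeal a ≤ RingHom.ker (substCurve (-(2 * a / 3))) := by
  have hx : -(2 * a / 3) * (3 * -(2 * a / 3) + 2 * a) = 0 := by ring
  have hy : 2 * a * (-(2 * a / 3)) ^ 2 + 6 = 0 := by linear_combination (2 / 9 : ℂ) * ha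
  rw [jacobianIdeal, Ideal.span_le, Set.insert_subset_iff, Set.singleton_subset_iff]
  simp only [SetLike.mem_coe, RingHom.mem_ker, substCurve_partialX, substCurve_partialY, hx, hy,
    map_zero, zero_mul, and_self]

theorem linearIndependent_yClass_pow {a : ℂ} (ha : 4 * a ^ 3 + 27 = 0) :
    LinearIndependent ℂ fun m : ℕ => yClass a ^ m := by
  have hsubst : (substCurve (-(2 * a / 3))).toLinearMap ∘ (fun m : ℕ => X 1 ^ m)
      = fun m => PowerSeries.X ^ m :=
    funext fun m => by simp [substCurve_X_one]
  have h := Ideal.Quotient.linearIndependent_mk_comp (substCurve (-(2 * a / 3))).toLinearMap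
    (fun z hz => jacobianIdeal_le_ker_substCurve ha hz)
    (hsubst ▸ PowerSeries.linearIndependent_X_pow ℂ)
  have hmk : (fun m : ℕ => yClass a ^ m) = Ideal.Quotient.mk _ ∘ fun m : ℕ => X 1 ^ m :=
    funext fun m => by simp
  rw [hmk]
  exact h

end J10

/-- For `f = x³ + a x² y² + y⁶` (type `J₁₀`), `f` has an isolated singularity
(finite Milnor number) iff `4a³ + 27 ≠ 0`, in which case the Milnor number is `10`. -/
theorem J10_isolated_iff (a : ℂ) :
    (FiniteDimensional ℂ
        (MvPowerSeries (Fin 2) ℂ ⧸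
          Ideal.span {3 * X 0 ^ 2 + 2 * (C (σ := Fin 2) (R := ℂ) a) * X 0 * X 1 ^ 2,
            2 * (C (σ := Fin 2) (R := ℂ) a) * X 0 ^ 2 * X 1 + 6 * X 1 ^ 5}) ↔
      4 * a ^ 3 + 27 ≠ 0) ∧
    (4 * a ^ 3 + 27 ≠ 0 →
      Module.finrank ℂ
        (MvPowerSeries (Fin 2) ℂ ⧸
          Ideal.span {3 * X 0 ^ 2 + 2 * (C (σ := Fin 2) (R := ℂ) a) * X 0 * X 1 ^ 2,
            2 * (C (σ := Fin 2) (R := ℂ) a) * X 0 ^ 2 * X 1 + 6 * X 1 ^ 5}) = 10) := by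
  change (FiniteDimensional ℂ (J10.MilnorAlgebra a) ↔ _) ∧
    (_ → Module.finrank ℂ (J10.MilnorAlgebra a) = 10)
  refine ⟨⟨fun _ ha => ?_, fun ha => Module.Finite.of_basis (J10.milnorBasis ha)⟩, fun ha => ?_⟩
  · exact Module.Finite.not_linearIndependent_of_infinite _ (J10.linearIndependent_yClass_pow ha)
  · simp [Module.finrank_eq_card_basis (J10.milnorBasis ha)]
end

section
/- Let d ≥ 1 and let f = (x^2+y^3)^2 + ∑_{3i+2j ≥ 12+d} w_{ij} x^i y^j ∈ ℂ[[x,y]], where the sum ranges over pairs (i,j) of nonnegative integers with 3i+2j ≥ 12+d. If ∑_{3i+2j = 12+d} (−1)^{⌊i/2⌋} w_{ij} ≠ 0 and μ(f) < ∞, then μ(f) ≥ 15 + d, where μ(f) = dim_ℂ ℂ[[x,y]]/⟨∂f/∂x, ∂f/∂y⟩. -/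
/-!
Give `x` weight 3 and `y` weight 2 and put `C = x² + y³`, so that `f_x = 4xC + …` and
`f_y = 6y²C + …` with remainders of weighted order at least `9 + d` and `10 + d`.

Since `f_y(0, y)` is `y⁵` times a unit and `y⁵` divides `f_x(0, y)`, some `η` makes
`f_x + η f_y = xV` divisible by `x`, and `V ≡ 4C` up to weighted order `6 + d`. Then the
Jacobian ideal is `(xV, h + (3/2) y² V)`, where `h = f_y - (3/2) y² V` has weighted order at
least `10 + d`.

Substituting the parametrisation `(t³, -t²)` of `C = 0` kills every multiple of `C`, and the
coefficient of `t^n` in `g(t³, -t²)` only sees the weight-`n` coefficients of `g`. By the weighted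
Euler identity `3x g_x + 2y g_y = (weight) · g`, the coefficient of `t^(10+d)` in `h(t³, -t²)` is a
nonzero multiple of the sum in the hypothesis.

If `xz + p` is in the Jacobian ideal and `p` is a combination of `1, …, y⁴`, then setting `x = 0`
gives `p = 0` and `z = aV + bh`. Suppose `z` is a combination of monomials `x^ε y^j` with `ε ≤ 1`
(there is exactly one of each weight other than 1) of weights below `12 + d` other than `10 + d`.
Comparing weighted homogeneous parts of `aV + bh` weight by weight, using the substitution at
weight `10 + d`, forces `z = 0`. So these `10 + d` monomials times `x`, together with
`1, …, y⁴`, are independent in the quotient.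
-/

open MvPowerSeries

/-- The formal partial derivative `∂g/∂x_i` of a power series in two variables,
defined coefficientwise. -/
noncomputable def pd (i : Fin 2) (g : MvPowerSeries (Fin 2) ℂ) :
    MvPowerSeries (Fin 2) ℂ :=
  fun m => ((m i : ℂ) + 1) * MvPowerSeries.coeff (m + Finsupp.single i 1) g

namespace MvPowerSeries

variable {σ R : Type*}

section CommSemiring

variable [CommSemiring R]

theorem coeff_X_mul_pderiv (i : σ) (g : MvPowerSeries σ R) (m : σ →₀ ℕ) :
    coeff m (X i * pderiv R i g) = m i * coeff m g := by
  rw [X_def, coeff_monomial_mul, one_mul]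
  split_ifs with h
  · rw [coeff_pderiv, tsub_add_cancel_of_le h, Finsupp.tsub_apply, Finsupp.single_eq_same,
      mul_comm]
    obtain ⟨k, hk⟩ : ∃ k, m i = k + 1 := Nat.exists_eq_add_of_le' (by simpa using h i)
    rw [hk, Nat.add_sub_cancel]
    push_cast
    ring
  · have : m i = 0 := by
      by_contra hm
      exact h (Finsupp.single_le_iff.mpr (Nat.one_le_iff_ne_zero.mpr hm))
    simp [this]

theorem le_weightedOrder_pderiv (w : σ → ℕ) (i : σ) {g : MvPowerSeries σ R} {n : ℕ}
    (hg : ↑(n + w i) ≤ g.weightedOrder w) : ↑n ≤ (pderiv R i g).weightedOrder w := by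
  refine le_weightedOrder w fun m hm => ?_
  rw [coeff_pderiv, coeff_eq_zero_of_lt_weightedOrder w (lt_of_lt_of_le ?_ hg), zero_mul]
  rw [map_add, Finsupp.weight_single, smul_eq_mul, one_mul]
  exact_mod_cast Nat.add_lt_add_right (by exact_mod_cast hm) _

theorem le_weightedOrder_add_of_le (w : σ → ℕ) {f g : MvPowerSeries σ R} {n : ℕ∞}
    (hf : n ≤ f.weightedOrder w) (hg : n ≤ g.weightedOrder w) : n ≤ (f + g).weightedOrder w :=
  (le_min hf hg).trans (min_weightedOrder_le_add w)

theorem le_weightedOrder_mul_of_le (w : σ → ℕ) {f g : MvPowerSeries σ R} {a b : ℕ}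
    (hf : ↑a ≤ f.weightedOrder w) (hg : ↑b ≤ g.weightedOrder w) :
    ↑(a + b) ≤ (f * g).weightedOrder w :=
  calc ((a + b : ℕ) : ℕ∞) = a + b := Nat.cast_add a b
    _ ≤ _ := add_le_add hf hg
    _ ≤ _ := le_weightedOrder_mul w

theorem succ_le_weightedOrder (w : σ → ℕ) {g : MvPowerSeries σ R} {n : ℕ}
    (hg : ↑n ≤ g.weightedOrder w) (hn : weightedHomogeneousComponent w n g = 0) :
    ↑(n + 1) ≤ g.weightedOrder w := by
  refine le_weightedOrder w fun m hm => ?_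
  rcases (Nat.lt_succ_iff.mp (by exact_mod_cast hm)).lt_or_eq with hlt | heq
  · exact coeff_eq_zero_of_lt_weightedOrder w (lt_of_lt_of_le (by exact_mod_cast hlt) hg)
  · simpa [coeff_weightedHomogeneousComponent, heq] using congrArg (coeff m) hn

theorem coeff_sum_smul_monomial {ι : Type*} [Fintype ι] {e : ι → σ →₀ ℕ}
    (he : Function.Injective e) (g : ι → R) (j : ι) :
    coeff (e j) (∑ i, g i • monomial (e i) (1 : R)) = g j := by
  classical
  rw [map_sum, Finset.sum_eq_single j (fun i _ hij => by
    rw [coeff_smul, coeff_monomial, if_neg (he.ne hij).symm, mul_zero]) (by simp)]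
  simp

theorem exists_eq_of_coeff_sum_smul_monomial_ne_zero {ι : Type*} [Fintype ι]
    {e : ι → σ →₀ ℕ} {g : ι → R} {m : σ →₀ ℕ}
    (hm : coeff m (∑ i, g i • monomial (e i) (1 : R)) ≠ 0) : ∃ i, m = e i := by
  classical
  by_contra! h
  refine hm ((map_sum _ _ _).trans (Finset.sum_eq_zero fun i _ => ?_))
  rw [coeff_smul, coeff_monomial, if_neg (h i), mul_zero]

theorem weightedOrder_X_pow [Nontrivial R] (w : σ → ℕ) (i : σ) (k : ℕ) :
    (X i ^ k : MvPowerSeries σ R).weightedOrder w = ↑(k * w i) := by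
  rw [X_pow_eq, weightedOrder_monomial_of_ne_zero _ one_ne_zero, Finsupp.weight_single,
    smul_eq_mul]

theorem weightedOrder_X [Nontrivial R] (w : σ → ℕ) (i : σ) :
    (X i : MvPowerSeries σ R).weightedOrder w = w i := by
  simpa using weightedOrder_X_pow (R := R) w i 1

end CommSemiring

theorem X_ne_zero [Semiring R] [Nontrivial R] (i : σ) : (X i : MvPowerSeries σ R) ≠ 0 :=
  nonZeroDivisors.ne_zero X_mem_nonzeroDivisors

theorem le_weightedOrder_of_mul [CommSemiring R] [NoZeroDivisors R] (w : σ → ℕ)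
    {a b : MvPowerSeries σ R} {n k : ℕ}
    (hab : ↑(n + k) ≤ (a * b).weightedOrder w) (hb : b.weightedOrder w ≤ k) :
    ↑n ≤ a.weightedOrder w := by
  rw [weightedOrder_mul] at hab
  by_contra! ha
  obtain ⟨p, hp⟩ := ENat.ne_top_iff_exists.mp (ne_top_of_lt ha)
  obtain ⟨q, hq⟩ := ENat.ne_top_iff_exists.mp (ne_top_of_le_ne_top (ENat.natCast_ne_top k) hb)
  rw [← hp, ← hq] at hab
  rw [← hp] at ha
  rw [← hq] at hb
  norm_cast at hab ha hb
  omega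

end MvPowerSeries

lemma Finsupp.single_zero_add_single_one (m : Fin 2 →₀ ℕ) :
    Finsupp.single 0 (m 0) + Finsupp.single 1 (m 1) = m := by
  ext i; fin_cases i <;> simp

def cuspWeight : Fin 2 → ℕ := ![3, 2]

lemma weight_cuspWeight (m : Fin 2 →₀ ℕ) :
    Finsupp.weight cuspWeight m = 3 * m 0 + 2 * m 1 := by
  simp [Finsupp.weight_eq_sum, Fin.sum_univ_two, cuspWeight, mul_comm]

def weightPairs (n : ℕ) : Finset (ℕ × ℕ) :=
  (Finset.range (n + 1) ×ˢ Finset.range (n + 1)).filter (fun p => 3 * p.1 + 2 * p.2 = n)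

lemma mem_weightPairs {n : ℕ} {p : ℕ × ℕ} : p ∈ weightPairs n ↔ 3 * p.1 + 2 * p.2 = n := by
  simp only [weightPairs, Finset.mem_filter, Finset.mem_product, Finset.mem_range,
    and_iff_right_iff_imp]
  omega

section Cusp

variable {R : Type*} [CommRing R]

lemma neg_one_pow_eq_of_weight {n : ℕ} {p : ℕ × ℕ} (hp : 3 * p.1 + 2 * p.2 = n) :
    (-1 : R) ^ p.2 = (-1) ^ ((n - 3 * (n % 2)) / 2) * (-1) ^ (p.1 / 2) := by
  have hsum : p.2 + 3 * (p.1 / 2) = (n - 3 * (n % 2)) / 2 := by omega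
  rw [← hsum, pow_add, pow_mul, mul_assoc, ← mul_pow]
  norm_num

lemma two_le_weightedOrder_of_constantCoeff_eq_zero {b : MvPowerSeries (Fin 2) R}
    (hb : constantCoeff b = 0) : 2 ≤ b.weightedOrder cuspWeight := by
  refine le_weightedOrder _ fun m hm => ?_
  have hm' : 3 * m 0 + 2 * m 1 < 2 := by rw [weight_cuspWeight] at hm; exact_mod_cast hm
  rw [← Finsupp.single_zero_add_single_one m, show m 0 = 0 by omega, show m 1 = 0 by omega,
    Finsupp.single_zero, Finsupp.single_zero, add_zero, coeff_zero_eq_constantCoeff_apply, hb]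

variable (R) in
noncomputable def cusp : MvPowerSeries (Fin 2) R := X 0 ^ 2 + X 1 ^ 3

lemma isWeightedHomogeneous_cusp : IsWeightedHomogeneous cuspWeight (cusp R) 6 := by
  intro m hm
  rw [cusp, map_add, coeff_X_pow, coeff_X_pow] at hm
  rw [weight_cuspWeight]
  by_cases h2 : m = Finsupp.single 0 2
  · simp [h2]
  · by_cases h3 : m = Finsupp.single 1 3
    · simp [h3]
    · simp [h2, h3] at hm

lemma weightedHomogeneousComponent_cusp :
    weightedHomogeneousComponent cuspWeight 6 (cusp R) = cusp R :=
  (isWeightedHomogeneous_iff_eq_weightedHomogeneousComponent.mp isWeightedHomogeneous_cusp).symm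

lemma six_le_weightedOrder_cusp : 6 ≤ (cusp R).weightedOrder cuspWeight :=
  le_weightedOrder _ fun _ hm => isWeightedHomogeneous_cusp.coeff_eq_zero
    (by exact_mod_cast hm.ne)

lemma cusp_ne_zero [Nontrivial R] : cusp R ≠ 0 := by
  intro h
  have := congrArg (coeff (Finsupp.single 0 2)) h
  rw [cusp, map_add, coeff_X_pow, coeff_X_pow, if_pos rfl, if_neg, coeff_zero] at this
  · simp at this
  · intro h'
    simpa using congrArg (· 0) h'

lemma weightedHomogeneousComponent_mul_cusp {a : MvPowerSeries (Fin 2) R} {j : ℕ}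
    (ha : ↑j ≤ a.weightedOrder cuspWeight) :
    weightedHomogeneousComponent cuspWeight (j + 6) (a * cusp R) =
      weightedHomogeneousComponent cuspWeight j a * cusp R := by
  rw [weightedHomogeneousComponent_mul_of_le_weightedOrder ha six_le_weightedOrder_cusp,
    weightedHomogeneousComponent_cusp]

lemma ten_le_weightedOrder_and_coeff_eq [Nontrivial R] {F : MvPowerSeries (Fin 2) R} {c : R}
    (hF : 10 < (F - X 1 ^ 2 * (c • cusp R)).weightedOrder cuspWeight) :
    10 ≤ F.weightedOrder cuspWeight ∧ coeff (Finsupp.single 1 5) F = c := by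
  rw [show F = (F - X 1 ^ 2 * (c • cusp R)) + X 1 ^ 2 * (c • cusp R) by ring]
  refine ⟨le_weightedOrder_add_of_le _ hF.le (le_weightedOrder_mul_of_le (a := 4) (b := 6) _
    (weightedOrder_X_pow _ _ _).ge (six_le_weightedOrder_cusp.trans (le_weightedOrder_smul _))),
    ?_⟩
  rw [map_add, coeff_eq_zero_of_lt_weightedOrder _
    (lt_of_le_of_lt (by simp [weight_cuspWeight]) hF), zero_add]
  simp only [cusp, smul_add, mul_add, X_pow_eq, ← map_smul, monomial_mul_monomial, map_add,
    coeff_monomial, ← Finsupp.single_add]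
  rw [if_neg fun h => by simpa using congrArg (· 0) h]
  simp

lemma pderiv_zero_cusp_sq : pderiv R 0 (cusp R ^ 2) = X 0 * ((4 : R) • cusp R) := by
  simp [cusp, smul_eq_C_mul, map_ofNat]
  ring

lemma pderiv_one_cusp_sq : pderiv R 1 (cusp R ^ 2) = X 1 ^ 2 * ((6 : R) • cusp R) := by
  simp [cusp, smul_eq_C_mul, map_ofNat]
  ring

end Cusp

section CuspEval

variable {R : Type*} [CommRing R]

noncomputable def cuspParam : Fin 2 → PowerSeries R := ![PowerSeries.X ^ 3, -PowerSeries.X ^ 2]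

lemma hasSubst_cuspParam : HasSubst (cuspParam (R := R)) := by
  have hX : constantCoeff (PowerSeries.X : PowerSeries R) = 0 := PowerSeries.constantCoeff_X
  exact hasSubst_of_constantCoeff_zero fun i => by fin_cases i <;> simp [cuspParam, hX]

noncomputable def cuspEval : MvPowerSeries (Fin 2) R →ₐ[R] PowerSeries R :=
  substAlgHom hasSubst_cuspParam

lemma cuspEval_X_zero : cuspEval (X 0 : MvPowerSeries (Fin 2) R) = PowerSeries.X ^ 3 :=
  substAlgHom_X _ _

lemma cuspEval_X_one : cuspEval (X 1 : MvPowerSeries (Fin 2) R) = -PowerSeries.X ^ 2 :=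
  substAlgHom_X _ _

lemma cuspEval_cusp : cuspEval (cusp R) = 0 := by
  rw [cusp, map_add, map_pow, map_pow, cuspEval_X_zero, cuspEval_X_one]
  ring

lemma coeff_cuspEval_X_zero_mul (g : MvPowerSeries (Fin 2) R) (n : ℕ) :
    PowerSeries.coeff (n + 3) (cuspEval (X 0 * g)) = PowerSeries.coeff n (cuspEval g) := by
  rw [map_mul, cuspEval_X_zero, PowerSeries.coeff_X_pow_mul]

lemma coeff_cuspEval_X_one_mul (g : MvPowerSeries (Fin 2) R) (n : ℕ) :
    PowerSeries.coeff (n + 2) (cuspEval (X 1 * g)) = -PowerSeries.coeff n (cuspEval g) := by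
  rw [map_mul, cuspEval_X_one, neg_mul, map_neg, PowerSeries.coeff_X_pow_mul]

lemma coeff_cuspEval_X_one_sq_mul (g : MvPowerSeries (Fin 2) R) (n : ℕ) :
    PowerSeries.coeff (n + 4) (cuspEval (X 1 ^ 2 * g)) = PowerSeries.coeff n (cuspEval g) := by
  rw [map_mul, map_pow, cuspEval_X_one, neg_sq, ← pow_mul, PowerSeries.coeff_X_pow_mul]

lemma coeff_prod_cuspParam (m : Fin 2 →₀ ℕ) (n : ℕ) :
    PowerSeries.coeff n (m.prod fun s e => cuspParam (R := R) s ^ e) =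
      if 3 * m 0 + 2 * m 1 = n then (-1) ^ m 1 else 0 := by
  rw [Finsupp.prod_fintype _ _ (by simp), Fin.prod_univ_two]
  simp only [cuspParam, Matrix.cons_val_zero, Matrix.cons_val_one, Matrix.cons_val_fin_one]
  rw [neg_pow, ← pow_mul, ← pow_mul, mul_left_comm, ← pow_add, ← map_one PowerSeries.C,
    ← map_neg, ← map_pow, PowerSeries.coeff_C_mul_X_pow]
  simp only [eq_comm]

lemma coeff_cuspEval (g : MvPowerSeries (Fin 2) R) (n : ℕ) :
    PowerSeries.coeff n (cuspEval g) = ∑ p ∈ weightPairs n,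
        (-1) ^ p.2 * coeff (Finsupp.single 0 p.1 + Finsupp.single 1 p.2) g := by
  rw [cuspEval, coe_substAlgHom, PowerSeries.coeff, coeff_subst hasSubst_cuspParam]
  change ∑ᶠ d, coeff d g • PowerSeries.coeff n _ = _
  have hinj : Set.InjOn (fun p : ℕ × ℕ => Finsupp.single (0 : Fin 2) p.1 + Finsupp.single 1 p.2)
      (weightPairs n) := fun p _ q _ hpq => by
    have h0 := congrArg (· 0) hpq
    have h1 := congrArg (· 1) hpq
    simp only [Finsupp.coe_add, Pi.add_apply, Finsupp.single_eq_same, Finsupp.single_eq_of_ne,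
      ne_eq, zero_ne_one, one_ne_zero, not_false_eq_true, add_zero, zero_add] at h0 h1
    exact Prod.ext h0 h1
  rw [finsum_eq_sum_of_support_subset _ (s := (weightPairs n).image
      fun p => Finsupp.single 0 p.1 + Finsupp.single 1 p.2), Finset.sum_image hinj]
  · refine Finset.sum_congr rfl fun p hp => ?_
    show coeff _ g • _ = _
    rw [smul_eq_mul, coeff_prod_cuspParam, mul_comm]
    simp [mem_weightPairs.mp hp]
  · intro m hm
    rw [Function.mem_support, coeff_prod_cuspParam] at hm
    split_ifs at hm with hw
    · exact Finset.mem_coe.mpr (Finset.mem_image.mpr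
        ⟨(m 0, m 1), mem_weightPairs.mpr hw, Finsupp.single_zero_add_single_one m⟩)
    · simp at hm

lemma coeff_cuspEval_congr {g g' : MvPowerSeries (Fin 2) R} {n : ℕ}
    (h : ∀ m, Finsupp.weight cuspWeight m = n → coeff m g = coeff m g') :
    PowerSeries.coeff n (cuspEval g) = PowerSeries.coeff n (cuspEval g') := by
  simp only [coeff_cuspEval]
  refine Finset.sum_congr rfl fun p hp => ?_
  rw [h _ (by simpa [weight_cuspWeight] using mem_weightPairs.mp hp)]

lemma coeff_cuspEval_eq_zero_of_lt {g : MvPowerSeries (Fin 2) R} {n : ℕ}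
    (h : ↑n < g.weightedOrder cuspWeight) : PowerSeries.coeff n (cuspEval g) = 0 := by
  rw [coeff_cuspEval_congr (g' := 0) fun m hm =>
    coeff_eq_zero_of_lt_weightedOrder _ (hm ▸ h), map_zero, map_zero]

lemma coeff_eq_zero_of_coeff_cuspEval_eq_zero {z : MvPowerSeries (Fin 2) R} {n : ℕ}
    (hz : ∀ m, 2 ≤ m 0 → coeff m z = 0) (h : PowerSeries.coeff n (cuspEval z) = 0)
    {m : Fin 2 →₀ ℕ} (hm : Finsupp.weight cuspWeight m = n) : coeff m z = 0 := by
  rw [weight_cuspWeight] at hm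
  by_cases hm0 : 2 ≤ m 0
  · exact hz m hm0
  rw [coeff_cuspEval, Finset.sum_eq_single_of_mem (m 0, m 1) (mem_weightPairs.mpr hm),
    Finsupp.single_zero_add_single_one] at h
  · simpa using h
  · intro p hp hne
    have hp' := mem_weightPairs.mp hp
    have hp1 : 2 ≤ p.1 := by
      by_contra
      exact hne (Prod.ext (by omega) (by omega))
    rw [hz _ (by simpa using hp1), mul_zero]

lemma weightedHomogeneousComponent_eq_zero_of_coeff_cuspEval_eq_zero
    {z : MvPowerSeries (Fin 2) R} {n : ℕ} (hz : ∀ m, 2 ≤ m 0 → coeff m z = 0)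
    (h : PowerSeries.coeff n (cuspEval z) = 0) :
    weightedHomogeneousComponent cuspWeight n z = 0 := by
  ext m
  rw [coeff_weightedHomogeneousComponent, coeff_zero]
  split_ifs with hm
  · exact coeff_eq_zero_of_coeff_cuspEval_eq_zero hz h hm
  · rfl

lemma coeff_cuspEval_weightedHomogeneousComponent (g : MvPowerSeries (Fin 2) R) (n : ℕ) :
    PowerSeries.coeff n (cuspEval (weightedHomogeneousComponent cuspWeight n g)) =
      PowerSeries.coeff n (cuspEval g) :=
  coeff_cuspEval_congr fun m hm => by rw [coeff_weightedHomogeneousComponent, if_pos hm]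

lemma coeff_cuspEval_eq_neg_one_pow_mul_sum (g : MvPowerSeries (Fin 2) R) (n : ℕ) :
    PowerSeries.coeff n (cuspEval g) = (-1) ^ ((n - 3 * (n % 2)) / 2) * ∑ p ∈ weightPairs n,
        (-1) ^ (p.1 / 2) * coeff (Finsupp.single 0 p.1 + Finsupp.single 1 p.2) g := by
  rw [coeff_cuspEval, Finset.mul_sum]
  refine Finset.sum_congr rfl fun p hp => ?_
  rw [neg_one_pow_eq_of_weight (mem_weightPairs.mp hp), mul_assoc]

lemma coeff_cuspEval_pderiv (g : MvPowerSeries (Fin 2) R) (n : ℕ) :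
    3 * PowerSeries.coeff n (cuspEval (pderiv R 0 g))
      - 2 * PowerSeries.coeff (n + 1) (cuspEval (pderiv R 1 g))
      = (n + 3) * PowerSeries.coeff (n + 3) (cuspEval g) := by
  have euler : PowerSeries.coeff (n + 3)
      (cuspEval ((3 : R) • (X 0 * pderiv R 0 g) + (2 : R) • (X 1 * pderiv R 1 g)))
      = (n + 3) * PowerSeries.coeff (n + 3) (cuspEval g) := by
    simp only [coeff_cuspEval, Finset.mul_sum]
    refine Finset.sum_congr rfl fun p hp => ?_
    have hw := congrArg (Nat.cast : ℕ → R) (mem_weightPairs.mp hp)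
    push_cast at hw
    simp only [map_add, map_smul, coeff_X_mul_pderiv, smul_eq_mul, Finsupp.add_apply,
      Finsupp.single_eq_same, Finsupp.single_eq_of_ne (show (1 : Fin 2) ≠ 0 by decide),
      Finsupp.single_eq_of_ne (show (0 : Fin 2) ≠ 1 by decide), add_zero, zero_add]
    rw [← hw]
    ring
  rw [← euler, map_add, map_smul, map_smul, map_add, PowerSeries.coeff_smul, PowerSeries.coeff_smul,
    coeff_cuspEval_X_zero_mul, show n + 3 = (n + 1) + 2 by ring, coeff_cuspEval_X_one_mul]
  simp only [smul_eq_mul]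
  ring

lemma coeff_cuspEval_pderiv_sub_ne_zero {K : Type*} [Field K] [CharZero K]
    {f : MvPowerSeries (Fin 2) K} {d : ℕ}
    (hf : ∑ p ∈ weightPairs (12 + d),
      (-1) ^ (p.1 / 2) * coeff (Finsupp.single 0 p.1 + Finsupp.single 1 p.2) f ≠ 0) :
    PowerSeries.coeff (10 + d) (cuspEval (pderiv K 1 f))
      - 3 / 2 * PowerSeries.coeff (9 + d) (cuspEval (pderiv K 0 f)) ≠ 0 := by
  intro h0
  have heuler := coeff_cuspEval_pderiv f (9 + d)
  rw [show 9 + d + 1 = 10 + d by ring, show 9 + d + 3 = 12 + d by ring,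
    coeff_cuspEval_eq_neg_one_pow_mul_sum f (12 + d)] at heuler
  have h12 : ((9 + d : ℕ) + 3 : K) ≠ 0 := by norm_cast
  have := heuler.symm.trans (by linear_combination -2 * h0 : _ = (0 : K))
  simp only [mul_eq_zero, h12, pow_eq_zero_iff', neg_eq_zero, one_ne_zero, false_and,
    false_or] at this
  exact hf this

end CuspEval

section SetXZero

variable {R : Type*} [CommRing R]

/-- `g ↦ g(0, y)`. -/
noncomputable def setXZero : MvPowerSeries (Fin 2) R →+* MvPowerSeries (Fin 2) R :=
  rescale ![0, 1]

lemma coeff_setXZero (g : MvPowerSeries (Fin 2) R) (m : Fin 2 →₀ ℕ) :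
    coeff m (setXZero g) = if m 0 = 0 then coeff m g else 0 := by
  rw [setXZero, coeff_rescale, Finsupp.prod_fintype _ _ (by simp), Fin.prod_univ_two]
  split_ifs with h <;> simp [h]

lemma X_zero_dvd_iff_setXZero_eq_zero {g : MvPowerSeries (Fin 2) R} :
    X 0 ∣ g ↔ setXZero g = 0 := by
  rw [X_dvd_iff, MvPowerSeries.ext_iff]
  refine forall_congr' fun m => ?_
  rw [coeff_setXZero, coeff_zero]
  split_ifs with h <;> simp [h]

lemma setXZero_X_zero_mul (g : MvPowerSeries (Fin 2) R) : setXZero (X 0 * g) = 0 :=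
  X_zero_dvd_iff_setXZero_eq_zero.mp (dvd_mul_right _ _)

lemma setXZero_setXZero (g : MvPowerSeries (Fin 2) R) : setXZero (setXZero g) = setXZero g := by
  ext m
  simp only [coeff_setXZero]
  split_ifs <;> rfl

lemma weightedOrder_le_weightedOrder_setXZero (w : Fin 2 → ℕ) (g : MvPowerSeries (Fin 2) R) :
    g.weightedOrder w ≤ (setXZero g).weightedOrder w :=
  le_weightedOrder w fun m hm => by
    rw [coeff_setXZero, coeff_eq_zero_of_lt_weightedOrder w hm, ite_self]

lemma X_one_pow_dvd_setXZero {g : MvPowerSeries (Fin 2) R} {k : ℕ}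
    (hg : ↑(2 * k) ≤ g.weightedOrder cuspWeight) : X 1 ^ k ∣ setXZero g := by
  rw [X_pow_dvd_iff]
  intro m hm
  rw [coeff_setXZero]
  split_ifs with h0
  · refine coeff_eq_zero_of_lt_weightedOrder _ (lt_of_lt_of_le ?_ hg)
    rw [weight_cuspWeight, h0]
    exact_mod_cast (by omega : 3 * 0 + 2 * m 1 < 2 * k)
  · rfl

end SetXZero

section Jacobian

variable {K : Type*} [Field K]

lemma exists_X_zero_dvd_add_mul {F₁ F₂ : MvPowerSeries (Fin 2) K} {d : ℕ} (hd : 1 ≤ d)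
    (hF₁ : ((9 + d : ℕ) : ℕ∞) ≤ (setXZero F₁).weightedOrder cuspWeight)
    (hF₂ : 10 ≤ F₂.weightedOrder cuspWeight) (hF₂' : coeff (Finsupp.single 1 5) F₂ ≠ 0) :
    ∃ η : MvPowerSeries (Fin 2) K, ↑(d - 1) ≤ η.weightedOrder cuspWeight ∧ X 0 ∣ F₁ + η * F₂ := by
  obtain ⟨U, hU⟩ := X_one_pow_dvd_setXZero (k := 5) hF₂
  obtain ⟨A, hA⟩ := X_one_pow_dvd_setXZero (k := 5) (le_trans (by norm_cast; omega) hF₁)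
  rw [setXZero_setXZero] at hA
  have hU₀ : constantCoeff U = coeff (Finsupp.single 1 5) F₂ := by
    have := congrArg (coeff (Finsupp.single 1 5)) hU
    rw [coeff_setXZero, if_pos (by simp), X_pow_eq, coeff_monomial_mul, if_pos le_rfl,
      one_mul, tsub_self] at this
    rw [this, coeff_zero_eq_constantCoeff_apply]
  have hUunit : IsUnit U := isUnit_iff_constantCoeff.mpr (hU₀ ▸ (Ne.isUnit hF₂'))
  set η := -(A * ↑hUunit.unit⁻¹)
  have hη : η * setXZero F₂ = -setXZero F₁ := by
    rw [hU, hA, show η * (X 1 ^ 5 * U) = -(X 1 ^ 5 * A * (↑hUunit.unit⁻¹ * U)) by ring,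
      IsUnit.val_inv_mul, mul_one]
  refine ⟨η, ?_, ?_⟩
  · have hρF₂ : (setXZero F₂).weightedOrder cuspWeight ≤ ↑10 := by
      refine (weightedOrder_le _ (d := Finsupp.single 1 5) ?_).trans_eq ?_
      · rwa [coeff_setXZero, if_pos (by simp)]
      · simp [weight_cuspWeight]
    refine le_weightedOrder_of_mul _ ?_ hρF₂
    rw [hη, weightedOrder_neg]
    exact le_trans (by norm_cast; omega) hF₁
  · rw [X_zero_dvd_iff_setXZero_eq_zero, map_add, map_mul, ← setXZero_setXZero F₂, ← map_mul, hη,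
      map_neg, setXZero_setXZero, add_neg_cancel]

lemma mem_span_of_X_zero_mul_add_mem {F₁ F₂ V h η z p : MvPowerSeries (Fin 2) K} {c : K}
    (hV : X 0 * V = F₁ + η * F₂) (hh : F₂ = h + c • (X 1 ^ 2 * V))
    (hdvd : X 1 ^ 5 ∣ setXZero F₂) (hne : setXZero F₂ ≠ 0)
    (hp : ∀ m, coeff m p ≠ 0 → m 0 = 0 ∧ m 1 < 5)
    (hmem : X 0 * z + p ∈ Ideal.span {F₁, F₂}) : p = 0 ∧ z ∈ Ideal.span {V, h} := by
  obtain ⟨α, β, hαβ⟩ := Ideal.mem_span_pair.mp hmem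
  have hEq : X 0 * (α * V) + (β - α * η) * F₂ = X 0 * z + p := by
    linear_combination α * hV + hαβ
  have hpρ : setXZero p = p := by
    ext m
    rw [coeff_setXZero]
    split_ifs with hm
    · rfl
    · exact (not_imp_comm.mp (hp m) fun h => hm h.1).symm
  have hρ : setXZero (β - α * η) * setXZero F₂ = p := by
    simpa [setXZero_X_zero_mul, hpρ] using congrArg setXZero hEq
  have hp0 : p = 0 := by
    have hp5 := X_pow_dvd_iff.mp (hρ ▸ dvd_mul_of_dvd_right hdvd _)
    ext m
    by_contra hm
    exact hm (hp5 m (hp m hm).2)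
  obtain ⟨β', hβ'⟩ := X_zero_dvd_iff_setXZero_eq_zero.mpr
    ((mul_eq_zero.mp (hρ.trans hp0)).resolve_right hne)
  have hz : z = α * V + β' * F₂ := by
    refine mul_left_cancel₀ (X_ne_zero 0) ?_
    rw [hp0, add_zero, hβ'] at hEq
    linear_combination -hEq
  refine ⟨hp0, Ideal.mem_span_pair.mpr ⟨α + c • (β' * X 1 ^ 2), β', ?_⟩⟩
  rw [hz, hh, smul_eq_C_mul, smul_eq_C_mul]
  ring

variable [CharZero K]

lemma exists_X_zero_mul_eq_add_mul {F₁ F₂ : MvPowerSeries (Fin 2) K} {d : ℕ} (hd : 1 ≤ d)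
    (hF₁ : ((9 + d : ℕ) : ℕ∞) ≤ (F₁ - X 0 * ((4 : K) • cusp K)).weightedOrder cuspWeight)
    (hF₂ : ((10 + d : ℕ) : ℕ∞) ≤ (F₂ - X 1 ^ 2 * ((6 : K) • cusp K)).weightedOrder cuspWeight) :
    ∃ η V : MvPowerSeries (Fin 2) K, X 0 * V = F₁ + η * F₂ ∧
      ((6 + d : ℕ) : ℕ∞) ≤ (V - (4 : K) • cusp K).weightedOrder cuspWeight ∧
      PowerSeries.coeff (6 + d) (cuspEval V) = PowerSeries.coeff (9 + d) (cuspEval F₁) := by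
  obtain ⟨hF₂10, hF₂5⟩ :=
    ten_le_weightedOrder_and_coeff_eq
      (lt_of_lt_of_le (by exact_mod_cast (by omega : 10 < 10 + d)) hF₂)
  have hρF₁ : ((9 + d : ℕ) : ℕ∞) ≤ (setXZero F₁).weightedOrder cuspWeight := by
    rw [show F₁ = (F₁ - X 0 * ((4 : K) • cusp K)) + X 0 * ((4 : K) • cusp K) by ring, map_add,
      setXZero_X_zero_mul, add_zero]
    exact hF₁.trans (weightedOrder_le_weightedOrder_setXZero _ _)
  obtain ⟨η, hη, V, hV⟩ := exists_X_zero_dvd_add_mul hd hρF₁ hF₂10 (by rw [hF₂5]; norm_num)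
  refine ⟨η, V, hV.symm, ?_, ?_⟩
  · refine le_weightedOrder_of_mul (b := X 0) (k := 3) _ ?_ (weightedOrder_X _ _).le
    rw [show (V - (4 : K) • cusp K) * X 0 = (F₁ - X 0 * ((4 : K) • cusp K)) + η * F₂ by
      linear_combination -hV]
    exact le_weightedOrder_add_of_le _ (le_trans (Nat.cast_le.mpr (by omega)) hF₁)
      (le_trans (Nat.cast_le.mpr (by omega)) (le_weightedOrder_mul_of_le (b := 10) _ hη hF₂10))
  · have hηG₂ : PowerSeries.coeff (6 + d + 3)
        (cuspEval (η * (F₂ - X 1 ^ 2 * ((6 : K) • cusp K)))) = 0 :=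
      coeff_cuspEval_eq_zero_of_lt (lt_of_lt_of_le (Nat.cast_lt.mpr (by omega))
        (le_weightedOrder_mul_of_le _ hη hF₂))
    have hηC : cuspEval (η * (X 1 ^ 2 * ((6 : K) • cusp K))) = 0 := by simp [cuspEval_cusp]
    rw [show 9 + d = 6 + d + 3 by ring, ← coeff_cuspEval_X_zero_mul, ← hV,
      show F₂ = (F₂ - X 1 ^ 2 * ((6 : K) • cusp K)) + X 1 ^ 2 * ((6 : K) • cusp K) by ring,
      mul_add, map_add, map_add, map_add, hηC, add_zero, hηG₂, add_zero]

theorem exists_jacobian_normal_form {F₁ F₂ : MvPowerSeries (Fin 2) K} {d : ℕ} (hd : 1 ≤ d)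
    (hF₁ : ((9 + d : ℕ) : ℕ∞) ≤ (F₁ - X 0 * ((4 : K) • cusp K)).weightedOrder cuspWeight)
    (hF₂ : ((10 + d : ℕ) : ℕ∞) ≤ (F₂ - X 1 ^ 2 * ((6 : K) • cusp K)).weightedOrder cuspWeight) :
    ∃ V h : MvPowerSeries (Fin 2) K,
      ((6 + d : ℕ) : ℕ∞) ≤ (V - (4 : K) • cusp K).weightedOrder cuspWeight ∧
      ((10 + d : ℕ) : ℕ∞) ≤ h.weightedOrder cuspWeight ∧
      PowerSeries.coeff (10 + d) (cuspEval h) = PowerSeries.coeff (10 + d) (cuspEval F₂)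
        - 3 / 2 * PowerSeries.coeff (9 + d) (cuspEval F₁) ∧
      ∀ z p : MvPowerSeries (Fin 2) K, (∀ m, coeff m p ≠ 0 → m 0 = 0 ∧ m 1 < 5) →
        X 0 * z + p ∈ Ideal.span {F₁, F₂} → p = 0 ∧ z ∈ Ideal.span {V, h} := by
  obtain ⟨η, V, hV, hV₄, hVeval⟩ := exists_X_zero_mul_eq_add_mul hd hF₁ hF₂
  obtain ⟨hF₂10, hF₂5⟩ :=
    ten_le_weightedOrder_and_coeff_eq
      (lt_of_lt_of_le (by exact_mod_cast (by omega : 10 < 10 + d)) hF₂)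
  set h := F₂ - (3 / 2 : K) • (X 1 ^ 2 * V) with hh
  have hhG : h = (F₂ - X 1 ^ 2 * ((6 : K) • cusp K))
      - (3 / 2 : K) • (X 1 ^ 2 * (V - (4 : K) • cusp K)) := by
    have hC : C (σ := Fin 2) (3 / 2 : K) * C 4 = C 6 := by rw [← map_mul]; norm_num
    simp only [hh, smul_eq_C_mul]
    linear_combination -(X 1 ^ 2 * cusp K) * hC
  refine ⟨V, h, hV₄, ?_, ?_, fun z p hp hmem => mem_span_of_X_zero_mul_add_mem hV
    (by rw [hh]; abel) (X_one_pow_dvd_setXZero hF₂10) ?_ hp hmem⟩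
  · rw [hhG, sub_eq_add_neg]
    refine le_weightedOrder_add_of_le _ hF₂ ?_
    rw [weightedOrder_neg]
    refine le_trans ?_ (le_weightedOrder_smul _)
    exact le_trans (Nat.cast_le.mpr (by omega))
      (le_weightedOrder_mul_of_le (a := 4) _ (weightedOrder_X_pow _ _ _).ge hV₄)
  · rw [hh, map_sub, map_smul, map_sub, PowerSeries.coeff_smul, smul_eq_mul,
      show 10 + d = 6 + d + 4 by ring, coeff_cuspEval_X_one_sq_mul, hVeval]
  · intro h0
    have := congrArg (coeff (Finsupp.single 1 5)) h0
    rw [coeff_setXZero, if_pos (by simp), hF₂5, coeff_zero] at this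
    norm_num at this

end Jacobian

section WeightArgument

variable {K : Type*} [Field K] {d : ℕ} {c : K} {V h : MvPowerSeries (Fin 2) K}

lemma coeff_cuspEval_mul_eq_zero
    (hV : ((6 + d : ℕ) : ℕ∞) ≤ (V - c • cusp K).weightedOrder cuspWeight)
    {a : MvPowerSeries (Fin 2) K} {j n : ℕ} (ha : ↑j ≤ a.weightedOrder cuspWeight)
    (hn : n < j + (6 + d)) : PowerSeries.coeff n (cuspEval (a * V)) = 0 := by
  rw [show a * V = a * (V - c • cusp K) + c • (a * cusp K) by
    rw [mul_sub, mul_smul_comm]; abel, map_add, map_smul, map_mul _ a (cusp K), cuspEval_cusp,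
    mul_zero, smul_zero, add_zero]
  exact coeff_cuspEval_eq_zero_of_lt
    (lt_of_lt_of_le (Nat.cast_lt.mpr hn) (le_weightedOrder_mul_of_le _ ha hV))

lemma weightedHomogeneousComponent_add_six_mul (hd : 1 ≤ d)
    (hV : ((6 + d : ℕ) : ℕ∞) ≤ (V - c • cusp K).weightedOrder cuspWeight)
    {a : MvPowerSeries (Fin 2) K} {j : ℕ} (ha : ↑j ≤ a.weightedOrder cuspWeight) :
    weightedHomogeneousComponent cuspWeight (j + 6) (a * V) =
      c • (weightedHomogeneousComponent cuspWeight j a * cusp K) := by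
  rw [show a * V = a * (V - c • cusp K) + c • (a * cusp K) by
    rw [mul_sub, mul_smul_comm]; abel, map_add, map_smul,
    weightedHomogeneousComponent_of_lt_weightedOrder_eq_zero
      (lt_of_lt_of_le (Nat.cast_lt.mpr (by omega)) (le_weightedOrder_mul_of_le _ ha hV)),
    weightedHomogeneousComponent_mul_cusp ha, zero_add]

lemma succ_le_weightedOrder_of_weightedHomogeneousComponent_mul_eq_zero (hd : 1 ≤ d) (hc : c ≠ 0)
    (hV : ((6 + d : ℕ) : ℕ∞) ≤ (V - c • cusp K).weightedOrder cuspWeight)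
    {a : MvPowerSeries (Fin 2) K} {j : ℕ} (ha : ↑j ≤ a.weightedOrder cuspWeight)
    (h0 : weightedHomogeneousComponent cuspWeight (j + 6) (a * V) = 0) :
    ↑(j + 1) ≤ a.weightedOrder cuspWeight := by
  rw [weightedHomogeneousComponent_add_six_mul hd hV ha, smul_eq_zero, mul_eq_zero] at h0
  exact succ_le_weightedOrder _ ha ((h0.resolve_left hc).resolve_right cusp_ne_zero)

lemma four_add_le_weightedOrder (hd : 1 ≤ d) (hc : c ≠ 0)
    (hV : ((6 + d : ℕ) : ℕ∞) ≤ (V - c • cusp K).weightedOrder cuspWeight)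
    (hh : ((10 + d : ℕ) : ℕ∞) ≤ h.weightedOrder cuspWeight) {a b : MvPowerSeries (Fin 2) K}
    (hz : ∀ m, 2 ≤ m 0 → coeff m (a * V + b * h) = 0) :
    ((4 + d : ℕ) : ℕ∞) ≤ a.weightedOrder cuspWeight := by
  have hbh : ∀ n < 10 + d, ↑n < (b * h).weightedOrder cuspWeight := fun n hn =>
    lt_of_lt_of_le (Nat.cast_lt.mpr (by omega))
      (le_weightedOrder_mul_of_le (a := 0) _ (by simp) hh)
  suffices ∀ j ≤ 4 + d, ↑j ≤ a.weightedOrder cuspWeight from this _ le_rfl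
  intro j hj
  induction j with
  | zero => simp
  | succ j ih =>
    have ih := ih (by omega)
    refine succ_le_weightedOrder_of_weightedHomogeneousComponent_mul_eq_zero hd hc hV ih ?_
    have hz0 := weightedHomogeneousComponent_eq_zero_of_coeff_cuspEval_eq_zero (n := j + 6) hz (by
      rw [map_add, map_add, coeff_cuspEval_mul_eq_zero hV ih (by omega),
        coeff_cuspEval_eq_zero_of_lt (hbh _ (by omega)), add_zero])
    rwa [map_add, weightedHomogeneousComponent_of_lt_weightedOrder_eq_zero (hbh _ (by omega)),
      add_zero] at hz0

lemma constantCoeff_eq_zero_of_coeff_cuspEval_eq_zero (hd : 1 ≤ d)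
    (hV : ((6 + d : ℕ) : ℕ∞) ≤ (V - c • cusp K).weightedOrder cuspWeight)
    (hh : ((10 + d : ℕ) : ℕ∞) ≤ h.weightedOrder cuspWeight)
    (hph : PowerSeries.coeff (10 + d) (cuspEval h) ≠ 0) {a b : MvPowerSeries (Fin 2) K}
    (ha : ((4 + d : ℕ) : ℕ∞) ≤ a.weightedOrder cuspWeight)
    (hz : PowerSeries.coeff (10 + d) (cuspEval (a * V + b * h)) = 0) : constantCoeff b = 0 := by
  have hb₁ : PowerSeries.coeff (10 + d) (cuspEval ((b - C (constantCoeff b)) * h)) = 0 :=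
    coeff_cuspEval_eq_zero_of_lt (lt_of_lt_of_le (Nat.cast_lt.mpr (by omega))
      (le_weightedOrder_mul_of_le (a := 2) _
        (two_le_weightedOrder_of_constantCoeff_eq_zero (by simp)) hh))
  rw [show b * h = constantCoeff b • h + (b - C (constantCoeff b)) * h by
    rw [smul_eq_C_mul]; ring, map_add, map_add, map_add, map_add,
    coeff_cuspEval_mul_eq_zero hV ha (by omega), hb₁, map_smul,
    PowerSeries.coeff_smul, smul_eq_mul, zero_add, add_zero] at hz
  exact (mul_eq_zero.mp hz).resolve_right hph

theorem le_weightedOrder_of_mem_span (hd : 1 ≤ d) (hc : c ≠ 0)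
    (hV : ((6 + d : ℕ) : ℕ∞) ≤ (V - c • cusp K).weightedOrder cuspWeight)
    (hh : ((10 + d : ℕ) : ℕ∞) ≤ h.weightedOrder cuspWeight)
    (hph : PowerSeries.coeff (10 + d) (cuspEval h) ≠ 0) {z : MvPowerSeries (Fin 2) K}
    (hz : ∀ m, 2 ≤ m 0 → coeff m z = 0)
    (hz₁₀ : weightedHomogeneousComponent cuspWeight (10 + d) z = 0)
    (hmem : z ∈ Ideal.span {V, h}) : ((12 + d : ℕ) : ℕ∞) ≤ z.weightedOrder cuspWeight := by
  obtain ⟨a, b, rfl⟩ := Ideal.mem_span_pair.mp hmem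
  have ha := four_add_le_weightedOrder hd hc hV hh hz
  have hb := two_le_weightedOrder_of_constantCoeff_eq_zero <|
    constantCoeff_eq_zero_of_coeff_cuspEval_eq_zero hd hV hh hph ha <| by
      rw [← coeff_cuspEval_weightedHomogeneousComponent, hz₁₀, map_zero, map_zero]
  have hbh : ((12 + d : ℕ) : ℕ∞) ≤ (b * h).weightedOrder cuspWeight :=
    le_trans (Nat.cast_le.mpr (by omega)) (le_weightedOrder_mul_of_le (a := 2) _ hb hh)
  have ha' : ((4 + d + 1 : ℕ) : ℕ∞) ≤ a.weightedOrder cuspWeight := by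
    refine succ_le_weightedOrder_of_weightedHomogeneousComponent_mul_eq_zero hd hc hV ha ?_
    rwa [map_add, weightedHomogeneousComponent_of_lt_weightedOrder_eq_zero
      (lt_of_lt_of_le (Nat.cast_lt.mpr (by omega)) hbh), add_zero,
      ← show 4 + d + 6 = 10 + d by ring] at hz₁₀
  refine le_weightedOrder _ fun m hm => coeff_eq_zero_of_coeff_cuspEval_eq_zero hz ?_ rfl
  have hm' : Finsupp.weight cuspWeight m < 12 + d := by exact_mod_cast hm
  rw [map_add, map_add, coeff_cuspEval_mul_eq_zero hV ha' (by omega),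
    coeff_cuspEval_eq_zero_of_lt (lt_of_lt_of_le (Nat.cast_lt.mpr hm') hbh), add_zero]

end WeightArgument

section Counting

variable {K : Type*} [Field K]

/-- For `n ≠ 1`, the exponent of the only monomial `x^ε y^j` with `ε ≤ 1` of weight `n`. -/
noncomputable def expOfWeight (n : ℕ) : Fin 2 →₀ ℕ :=
  if n % 2 = 0 then Finsupp.single 1 (n / 2)
  else Finsupp.single 0 1 + Finsupp.single 1 ((n - 3) / 2)

lemma weight_expOfWeight {n : ℕ} (hn : n ≠ 1) : Finsupp.weight cuspWeight (expOfWeight n) = n := by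
  rw [weight_cuspWeight, expOfWeight]
  split_ifs <;>
    simp only [Finsupp.coe_add, Pi.add_apply, Finsupp.single_eq_same, Finsupp.single_eq_of_ne,
      ne_eq, zero_ne_one, one_ne_zero, not_false_eq_true, add_zero, zero_add, mul_zero,
      mul_one] <;> omega

lemma expOfWeight_apply_zero_le (n : ℕ) : expOfWeight n 0 ≤ 1 := by
  rw [expOfWeight]
  split_ifs <;> simp

def quotientWeights (d : ℕ) : Finset ℕ := Finset.range (12 + d) \ {1, 10 + d}

lemma mem_quotientWeights {d n : ℕ} :
    n ∈ quotientWeights d ↔ n < 12 + d ∧ n ≠ 1 ∧ n ≠ 10 + d := by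
  simp [quotientWeights]

lemma card_quotientWeights (d : ℕ) : (quotientWeights d).card = 10 + d := by
  rw [quotientWeights, Finset.card_sdiff_of_subset (fun n => by
    simp only [Finset.mem_insert, Finset.mem_singleton, Finset.mem_range]; omega),
    Finset.card_range,
    Finset.card_pair (by omega)]
  omega

lemma injective_expOfWeight_quotientWeights (d : ℕ) :
    Function.Injective fun k : quotientWeights d => expOfWeight k := fun k l hkl => by
  have hw := congrArg (Finsupp.weight cuspWeight) hkl
  simp only at hw
  rwa [weight_expOfWeight (mem_quotientWeights.mp k.2).2.1,
    weight_expOfWeight (mem_quotientWeights.mp l.2).2.1, ← Subtype.ext_iff] at hw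

lemma coeff_sum_monomial_expOfWeight_eq_zero {d : ℕ} (g : quotientWeights d → K)
    {m : Fin 2 →₀ ℕ} (hm : 2 ≤ m 0) :
    coeff m (∑ k, g k • monomial (expOfWeight k) (1 : K)) = 0 := by
  by_contra hne
  obtain ⟨k, rfl⟩ := exists_eq_of_coeff_sum_smul_monomial_ne_zero hne
  exact absurd hm (not_le.mpr (Nat.lt_succ_of_le (expOfWeight_apply_zero_le k)))

lemma weightedHomogeneousComponent_sum_monomial_expOfWeight {d : ℕ} (g : quotientWeights d → K) :
    weightedHomogeneousComponent cuspWeight (10 + d)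
      (∑ k, g k • monomial (expOfWeight k) (1 : K)) = 0 := by
  ext m
  rw [coeff_weightedHomogeneousComponent, coeff_zero]
  split_ifs with hm
  · by_contra hne
    obtain ⟨k, rfl⟩ := exists_eq_of_coeff_sum_smul_monomial_ne_zero hne
    rw [weight_expOfWeight (mem_quotientWeights.mp k.2).2.1] at hm
    exact (mem_quotientWeights.mp k.2).2.2 hm
  · rfl

noncomputable def quotientMonomial (d : ℕ) : Fin 5 ⊕ quotientWeights d → MvPowerSeries (Fin 2) K :=
  Sum.elim (fun i => monomial (Finsupp.single 1 (i : ℕ)) 1)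
    (fun k => X 0 * monomial (expOfWeight k) 1)

lemma linearIndependent_quotientMonomial {d : ℕ} {J : Ideal (MvPowerSeries (Fin 2) K)}
    (hJ : ∀ z p : MvPowerSeries (Fin 2) K, (∀ m, coeff m p ≠ 0 → m 0 = 0 ∧ m 1 < 5) →
      (∀ m, 2 ≤ m 0 → coeff m z = 0) → weightedHomogeneousComponent cuspWeight (10 + d) z = 0 →
      X 0 * z + p ∈ J → p = 0 ∧ ((12 + d : ℕ) : ℕ∞) ≤ z.weightedOrder cuspWeight) :
    LinearIndependent K fun i => Ideal.Quotient.mkₐ K J (quotientMonomial d i) := by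
  rw [Fintype.linearIndependent_iff]
  intro g hg
  set p := ∑ i, g (Sum.inl i) • monomial (Finsupp.single (1 : Fin 2) (i : ℕ)) (1 : K)
  set z := ∑ k, g (Sum.inr k) • monomial (expOfWeight k) (1 : K)
  have hmem : X 0 * z + p ∈ J := by
    rw [← Ideal.Quotient.eq_zero_iff_mem, ← Ideal.Quotient.mkₐ_eq_mk K, ← hg,
      Fintype.sum_sum_type, add_comm, map_add, Finset.mul_sum, map_sum, map_sum]
    simp only [quotientMonomial, Sum.elim_inl, Sum.elim_inr, mul_smul_comm, map_smul]
  have hpinj : Function.Injective fun i : Fin 5 => Finsupp.single (1 : Fin 2) (i : ℕ) :=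
    (Finsupp.single_injective _).comp Fin.val_injective
  obtain ⟨hp0, hz⟩ := hJ z p (fun m hm => by
      obtain ⟨i, rfl⟩ := exists_eq_of_coeff_sum_smul_monomial_ne_zero hm
      simp)
    (fun m => coeff_sum_monomial_expOfWeight_eq_zero _)
    (weightedHomogeneousComponent_sum_monomial_expOfWeight _) hmem
  rintro (i | k)
  · rw [← coeff_sum_smul_monomial hpinj (fun i => g (Sum.inl i)) i]
    change coeff _ p = 0
    rw [hp0, coeff_zero]
  · rw [← coeff_sum_smul_monomial (injective_expOfWeight_quotientWeights d)
      (fun k => g (Sum.inr k)) k]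
    refine coeff_eq_zero_of_lt_weightedOrder _ (lt_of_lt_of_le ?_ hz)
    rw [weight_expOfWeight (mem_quotientWeights.mp k.2).2.1]
    exact Nat.cast_lt.mpr (mem_quotientWeights.mp k.2).1

theorem le_finrank_quotient {d : ℕ} (hd : 1 ≤ d) {c : K} (hc : c ≠ 0)
    {V h : MvPowerSeries (Fin 2) K}
    (hV : ((6 + d : ℕ) : ℕ∞) ≤ (V - c • cusp K).weightedOrder cuspWeight)
    (hh : ((10 + d : ℕ) : ℕ∞) ≤ h.weightedOrder cuspWeight)
    (hph : PowerSeries.coeff (10 + d) (cuspEval h) ≠ 0) {J : Ideal (MvPowerSeries (Fin 2) K)}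
    [FiniteDimensional K (MvPowerSeries (Fin 2) K ⧸ J)]
    (hJ : ∀ z p : MvPowerSeries (Fin 2) K, (∀ m, coeff m p ≠ 0 → m 0 = 0 ∧ m 1 < 5) →
      X 0 * z + p ∈ J → p = 0 ∧ z ∈ Ideal.span {V, h}) :
    15 + d ≤ Module.finrank K (MvPowerSeries (Fin 2) K ⧸ J) := by
  have hv := linearIndependent_quotientMonomial fun z p hp hz hz₁₀ hmem =>
    have ⟨hp0, hzmem⟩ := hJ z p hp hmem
    ⟨hp0, le_weightedOrder_of_mem_span hd hc hV hh hph hz hz₁₀ hzmem⟩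
  have := hv.fintype_card_le_finrank
  rwa [Fintype.card_sum, Fintype.card_fin, Fintype.card_coe, card_quotientWeights,
    ← add_assoc] at this

end Counting

lemma pd_eq_pderiv (i : Fin 2) (g : MvPowerSeries (Fin 2) ℂ) : pd i g = pderiv ℂ i g := by
  ext m
  rw [coeff_pderiv, mul_comm]
  rfl

/-- For `f = (x²+y³)² + ∑_{3i+2j ≥ 12+d} w_{ij} x^i y^j` with
`∑_{3i+2j = 12+d} (−1)^{⌊i/2⌋} w_{ij} ≠ 0` and finite Milnor number,
the Milnor number satisfies `μ(f) ≥ 15 + d`. -/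
theorem Wsharp_milnor_lower_bound (d : ℕ) (hd : 1 ≤ d)
    (f : MvPowerSeries (Fin 2) ℂ)
    (hform : ∀ m : Fin 2 →₀ ℕ,
      MvPowerSeries.coeff m
        (f - ((X 0 : MvPowerSeries (Fin 2) ℂ) ^ 2 + X 1 ^ 3) ^ 2) ≠ 0 →
      12 + d ≤ 3 * m 0 + 2 * m 1)
    (hsum : ∑ p ∈ (Finset.range (13 + d) ×ˢ Finset.range (13 + d)).filter
        (fun p => 3 * p.1 + 2 * p.2 = 12 + d),
        (-1 : ℂ) ^ (p.1 / 2) *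
          MvPowerSeries.coeff (Finsupp.single 0 p.1 + Finsupp.single 1 p.2) f ≠ 0)
    [FiniteDimensional ℂ (MvPowerSeries (Fin 2) ℂ ⧸ Ideal.span {pd 0 f, pd 1 f})] :
    15 + d ≤ Module.finrank ℂ
      (MvPowerSeries (Fin 2) ℂ ⧸ Ideal.span {pd 0 f, pd 1 f}) := by
  have hG : ((12 + d : ℕ) : ℕ∞) ≤ (f - cusp ℂ ^ 2).weightedOrder cuspWeight :=
    le_weightedOrder _ fun m hm => by
      by_contra hne
      rw [weight_cuspWeight] at hm
      exact absurd hm (not_lt.mpr (Nat.cast_le.mpr (hform m hne)))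
  have hfx : ((9 + d : ℕ) : ℕ∞) ≤ (pd 0 f - X 0 * ((4 : ℂ) • cusp ℂ)).weightedOrder cuspWeight := by
    rw [pd_eq_pderiv, ← pderiv_zero_cusp_sq, ← map_sub]
    refine le_weightedOrder_pderiv _ _ (show ((9 + d + 3 : ℕ) : ℕ∞) ≤ _ from ?_)
    rwa [show 9 + d + 3 = 12 + d by ring]
  have hfy : ((10 + d : ℕ) : ℕ∞) ≤
      (pd 1 f - X 1 ^ 2 * ((6 : ℂ) • cusp ℂ)).weightedOrder cuspWeight := by
    rw [pd_eq_pderiv, ← pderiv_one_cusp_sq, ← map_sub]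
    refine le_weightedOrder_pderiv _ _ (show ((10 + d + 2 : ℕ) : ℕ∞) ≤ _ from ?_)
    rwa [show 10 + d + 2 = 12 + d by ring]
  obtain ⟨V, h, hV, hh, hph, hJ⟩ := exists_jacobian_normal_form hd hfx hfy
  refine le_finrank_quotient hd (c := 4) (by norm_num) hV hh ?_ hJ
  rw [hph, pd_eq_pderiv, pd_eq_pderiv]
  exact coeff_cuspEval_pderiv_sub_ne_zero (by rwa [weightPairs, show 12 + d + 1 = 13 + d by ring])
end
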